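/- arXiv:0808.3516 — 5 statements merged into one kernel-verified Lean document; each statement's English description precedes it below -/
import Mathlib

section
/- Let d ≥ 3, u ∈ ℝ, q ∈ (0,1). Define the (d+1)×(d+1) matrix M(u) with entries M(u)_{jr} = e^{-ju} q^{r-j} C(r,j) (1 - e^{-u})^{r-j} for 0 ≤ j ≤ r ≤ d and 0 otherwise. Then M(v_1 + v_2) = M(v_1) M(v_2) for all v_1, v_2 ∈ ℝ; in particular M(-v) = M(v)^{-1}. -/
/-!
The matrix with entries `C(r, j) xʲ y^(r-j)` is the matrix, in the monomial basis, of the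
substitution `p(t) ↦ p(x t + y)` on polynomials of bounded degree: its column `r` holds the
coefficients of `(x t + y) ^ r`. Composing two affine substitutions
gives `x₁ x₂ t + (y₁ x₂ + y₂)`, and for `x = e^{-u}`, `y = q (1 - e^{-u})` this composition law is
exactly addition of the parameters `u`. Hence `M` is a one-parameter group with `M 0 = 1`.
-/

open Finset

variable {R : Type*} [CommSemiring R]

theorem sum_choose_mul_choose_mul_pow (x₁ y₁ x₂ y₂ : R) (j r : ℕ) :
    ∑ k ∈ Icc j r, (k.choose j * x₁ ^ j * y₁ ^ (k - j)) * (r.choose k * x₂ ^ k * y₂ ^ (r - k)) =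
      r.choose j * (x₁ * x₂) ^ j * (y₁ * x₂ + y₂) ^ (r - j) := by
  rcases lt_or_ge r j with hrj | hjr
  · simp [Icc_eq_empty_of_lt hrj, Nat.choose_eq_zero_of_lt hrj]
  obtain ⟨n, rfl⟩ := Nat.exists_eq_add_of_le hjr
  rw [← Ico_add_one_right_eq_Icc, sum_Ico_eq_sum_range, Nat.add_sub_cancel_left,
    show j + n + 1 - j = n + 1 by omega, add_pow, mul_sum]
  refine sum_congr rfl fun m _ => ?_
  have hchoose : ((j + n).choose (j + m) : R) * (j + m).choose j = (j + n).choose j * n.choose m := by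
    have := Nat.choose_mul (n := j + n) (Nat.le_add_right j m)
    rw [Nat.add_sub_cancel_left, Nat.add_sub_cancel_left] at this
    rw [← Nat.cast_mul, this, Nat.cast_mul]
  rw [Nat.add_sub_cancel_left, Nat.add_sub_add_left, pow_add]
  calc _ = ((j + n).choose (j + m) : R) * (j + m).choose j *
        (x₁ ^ j * x₂ ^ j * (y₁ ^ m * x₂ ^ m * y₂ ^ (n - m))) := by ring
    _ = _ := by rw [hchoose, mul_pow]; ring

def affineSubstMatrix (n : ℕ) (x y : R) : Matrix (Fin n) (Fin n) R :=
  Matrix.of fun j r => ((r : ℕ).choose j : R) * x ^ (j : ℕ) * y ^ ((r : ℕ) - j)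

theorem affineSubstMatrix_apply (n : ℕ) (x y : R) (j r : Fin n) :
    affineSubstMatrix n x y j r = ((r : ℕ).choose j : R) * x ^ (j : ℕ) * y ^ ((r : ℕ) - j) :=
  rfl

theorem affineSubstMatrix_mul (n : ℕ) (x₁ y₁ x₂ y₂ : R) :
    affineSubstMatrix n x₁ y₁ * affineSubstMatrix n x₂ y₂ =
      affineSubstMatrix n (x₁ * x₂) (y₁ * x₂ + y₂) := by
  ext j r
  let f : ℕ → R := fun k =>
    (k.choose j * x₁ ^ (j : ℕ) * y₁ ^ (k - j)) * ((r : ℕ).choose k * x₂ ^ k * y₂ ^ ((r : ℕ) - k))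
  have hIcc : Icc (j : ℕ) r ⊆ range n := fun k hk =>
    mem_range.mpr ((mem_Icc.mp hk).2.trans_lt r.isLt)
  have hvanish : ∀ k ∈ range n, k ∉ Icc (j : ℕ) r → f k = 0 := by
    intro k _ hk
    rw [mem_Icc, not_and_or, not_le, not_le] at hk
    rcases hk with h | h <;> simp [f, Nat.choose_eq_zero_of_lt h]
  calc (affineSubstMatrix n x₁ y₁ * affineSubstMatrix n x₂ y₂) j r
      = ∑ k ∈ range n, f k := by
        rw [Matrix.mul_apply, ← Fin.sum_univ_eq_sum_range f]
        rfl
    _ = ∑ k ∈ Icc (j : ℕ) r, f k := (sum_subset hIcc hvanish).symm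
    _ = _ := sum_choose_mul_choose_mul_pow x₁ y₁ x₂ y₂ j r

theorem affineSubstMatrix_one_zero (n : ℕ) : affineSubstMatrix n (1 : R) 0 = 1 := by
  ext j r
  rw [affineSubstMatrix_apply, Matrix.one_apply, one_pow, mul_one]
  rcases lt_trichotomy j r with h | rfl | h
  · simp [h.ne, Nat.sub_ne_zero_of_lt (Fin.lt_def.mp h)]
  · simp
  · simp [h.ne', Nat.choose_eq_zero_of_lt (Fin.lt_def.mp h)]

theorem stmt_5_general (d : ℕ) (q : ℝ)
    (M : ℝ → Matrix (Fin (d + 1)) (Fin (d + 1)) ℝ)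
    (hM : ∀ u, ∀ j r : Fin (d + 1), M u j r =
      if (j : ℕ) ≤ (r : ℕ) then
        Real.exp (-(j : ℝ) * u) * q ^ ((r : ℕ) - (j : ℕ)) *
          (Nat.choose (r : ℕ) (j : ℕ)) * (1 - Real.exp (-u)) ^ ((r : ℕ) - (j : ℕ))
      else 0) :
    (∀ v₁ v₂ : ℝ, M (v₁ + v₂) = M v₁ * M v₂) ∧ (∀ v : ℝ, M (-v) = (M v)⁻¹) := by
  have hM' : ∀ u, M u = affineSubstMatrix (d + 1) (Real.exp (-u)) (q * (1 - Real.exp (-u))) := by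
    intro u
    ext j r
    rw [hM, affineSubstMatrix_apply]
    split_ifs with hjr
    · rw [neg_mul, ← mul_neg, Real.exp_nat_mul, mul_pow]
      ring
    · simp [Nat.choose_eq_zero_of_lt (not_le.mp hjr)]
  have hmul : ∀ v₁ v₂ : ℝ, M (v₁ + v₂) = M v₁ * M v₂ := by
    intro v₁ v₂
    rw [hM', hM', hM', affineSubstMatrix_mul, neg_add, Real.exp_add]
    congr 1
    ring
  have hzero : M 0 = 1 := by
    rw [hM', neg_zero, Real.exp_zero, sub_self, mul_zero, affineSubstMatrix_one_zero]
  refine ⟨hmul, fun v => (Matrix.inv_eq_right_inv ?_).symm⟩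
  rw [← hmul, add_neg_cancel, hzero]

theorem stmt_5 (d : ℕ) (hd : 3 ≤ d) (q : ℝ) (hq0 : 0 < q) (hq1 : q < 1)
    (M : ℝ → Matrix (Fin (d + 1)) (Fin (d + 1)) ℝ)
    (hM : ∀ u, ∀ j r : Fin (d + 1), M u j r =
      if (j : ℕ) ≤ (r : ℕ) then
        Real.exp (-(j : ℝ) * u) * q ^ ((r : ℕ) - (j : ℕ)) *
          (Nat.choose (r : ℕ) (j : ℕ)) * (1 - Real.exp (-u)) ^ ((r : ℕ) - (j : ℕ))
      else 0) :
    (∀ v₁ v₂ : ℝ, M (v₁ + v₂) = M v₁ * M v₂) ∧ (∀ v : ℝ, M (-v) = (M v)⁻¹) :=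
  stmt_5_general d q M hM
end

section
/- Let d ≥ 3 and p ∈ (0,1), q = 1-p, with p(d-1) > 1. Let π ∈ (0,1) be the root of π = (pπ + q)^{d-1}. Then 1 - π is of order p - p* exactly as p ↓ p* = 1/(d-1); that is, there exist constants c_1, c_2 > 0 (depending only on d) and ε > 0 such that for all p with 0 < p - p* < ε, c_1(p - p*) ≤ 1 - π ≤ c_2(p - p*). -/
/-!
Put `n = d - 1` and `v = p π + q`, so that `π = vⁿ` and `1 - v = p (1 - π)`. Expanding
`1 - vⁿ = (1 - v) ∑_{k<n} vᵏ` gives the exact identity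
`(1 - π) (n p - 1) = n (1 - v) - (1 - vⁿ) = (1 - v) ∑_{k<n} (1 - vᵏ)`,
and the last sum lies between `1 - v` and `n² (1 - v)`. Hence `(1 - π) (n p - 1)` is comparable
to `(1 - v)² = p² (1 - π)²`, i.e. `1 - π` is comparable to `n p - 1 = n (p - p*)`.
-/

open Finset

theorem mul_one_sub_sub_one_sub_pow {R : Type*} [CommRing R] (v : R) (n : ℕ) :
    n * (1 - v) - (1 - v ^ n) = (1 - v) * ∑ k ∈ range n, (1 - v ^ k) := by
  rw [← mul_neg_geom_sum, sum_sub_distrib, sum_const, card_range, nsmul_eq_mul, mul_one]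
  ring

theorem one_sub_le_sum_range_one_sub_pow {v : ℝ} (hv₀ : 0 ≤ v) (hv₁ : v ≤ 1) {n : ℕ}
    (hn : 2 ≤ n) :
    1 - v ≤ ∑ k ∈ range n, (1 - v ^ k) := by
  simpa using single_le_sum (f := fun k => 1 - v ^ k)
    (fun k _ => sub_nonneg.mpr (pow_le_one₀ hv₀ hv₁)) (mem_range.mpr hn)

theorem sum_range_one_sub_pow_le {v : ℝ} (hv₀ : 0 ≤ v) (hv₁ : v ≤ 1) (n : ℕ) :
    ∑ k ∈ range n, (1 - v ^ k) ≤ (n : ℝ) ^ 2 * (1 - v) := by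
  calc ∑ k ∈ range n, (1 - v ^ k) ≤ ∑ _k ∈ range n, (n : ℝ) * (1 - v) := by
        refine sum_le_sum fun k hk => ?_
        have hk : (k : ℝ) ≤ n := by exact_mod_cast (mem_range.mp hk).le
        have bernoulli : 1 + (k : ℝ) * (v - 1) ≤ v ^ k := by
          simpa using one_add_mul_le_pow (a := v - 1) (by linarith) k
        nlinarith
    _ = (n : ℝ) ^ 2 * (1 - v) := by simp; ring

theorem mul_sub_one_bounds_of_fixedPoint {n : ℕ} (hn : 2 ≤ n) {p x : ℝ} (hp₀ : 0 < p) (hp₁ : p ≤ 1)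
    (hx₀ : 0 ≤ x) (hx₁ : x < 1) (hfix : x = (p * x + (1 - p)) ^ n) :
    p ^ 2 * (1 - x) ≤ n * p - 1 ∧ n * p - 1 ≤ (n : ℝ) ^ 2 * p ^ 2 * (1 - x) := by
  set v := p * x + (1 - p)
  have hv : 1 - v = p * (1 - x) := by ring
  have hv₀ : 0 ≤ v := by nlinarith
  have hv₁ : v ≤ 1 := by nlinarith
  have hx : 0 < 1 - x := by linarith
  have key : (1 - x) * (n * p - 1) = (1 - v) * ∑ k ∈ range n, (1 - v ^ k) := by
    rw [← mul_one_sub_sub_one_sub_pow, ← hfix, hv]; ring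
  have lower := mul_le_mul_of_nonneg_left
    (one_sub_le_sum_range_one_sub_pow hv₀ hv₁ hn) (sub_nonneg.mpr hv₁)
  have upper := mul_le_mul_of_nonneg_left
    (sum_range_one_sub_pow_le hv₀ hv₁ n) (sub_nonneg.mpr hv₁)
  rw [← key, hv] at lower upper
  constructor
  · nlinarith
  · nlinarith

theorem stmt_10 (d : ℕ) (hd : 3 ≤ d) :
    ∃ c₁ c₂ ε : ℝ, 0 < c₁ ∧ 0 < c₂ ∧ 0 < ε ∧
      ∀ p : ℝ, 1 / ((d : ℝ) - 1) < p → p - 1 / ((d : ℝ) - 1) < ε → p < 1 →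
        ∀ x : ℝ, x ∈ Set.Ioo (0 : ℝ) 1 → x = (p * x + (1 - p)) ^ (d - 1) →
          c₁ * (p - 1 / ((d : ℝ) - 1)) ≤ 1 - x ∧
          1 - x ≤ c₂ * (p - 1 / ((d : ℝ) - 1)) := by
  have hn : ((d - 1 : ℕ) : ℝ) = (d : ℝ) - 1 := by
    rw [Nat.cast_sub (by omega), Nat.cast_one]
  have hn₂ : (2 : ℝ) ≤ (d : ℝ) - 1 := by rw [← hn]; exact_mod_cast (by omega : 2 ≤ d - 1)
  set n := (d : ℝ) - 1
  refine ⟨1 / n, n ^ 3, 1, by positivity, by positivity, one_pos, ?_⟩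
  intro p hp _ hp₁ x ⟨hx₀, hx₁⟩ hfix
  have hnp : 1 < n * p := by rwa [div_lt_iff₀ (by positivity), mul_comm] at hp
  have hp₀ : 0 < p := lt_trans (by positivity) hp
  obtain ⟨above, below⟩ := mul_sub_one_bounds_of_fixedPoint (by omega) hp₀ hp₁.le hx₀.le hx₁ hfix
  rw [hn] at above below
  have hsub : p - 1 / n = (n * p - 1) / n := by field_simp
  rw [hsub]
  constructor
  · rw [div_mul_div_comm, one_mul, div_le_iff₀ (by positivity)]
    nlinarith [mul_le_mul_of_nonneg_left hp₁.le (by positivity : (0 : ℝ) ≤ n ^ 2 * (1 - x))]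
  · rw [mul_div_assoc', le_div_iff₀ (by positivity)]
    have hnp₂ : 1 ≤ (n * p) ^ 2 := by nlinarith
    nlinarith [mul_le_mul_of_nonneg_left above (by positivity : (0 : ℝ) ≤ n ^ 3),
      mul_le_mul_of_nonneg_left hnp₂ (by nlinarith : (0 : ℝ) ≤ n * (1 - x))]
end

section
/- Let d ≥ 3, p ∈ (0,1), q = 1-p with p(d-1) > 1, m ∈ {0,1,2}, n large. Let f(y) = y - (py+q)^{d-1}(1 - m/n) on [0,1], let ŷ ∈ (0,1) be its smaller root and π the root of y = (py+q)^{d-1} in (0,1). Then |ŷ - π| = O(n^{-1/2}) as n → ∞, uniformly over p with p - p* bounded. -/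
/-!
Substitute `t = p y + (1 - p)` and `k = d - 1`: then `π` and `ŷ` become solutions `b`, `a` in `(0, 1)`
of `p t ^ k = t - (1 - p)` and `p t ^ k = t - (1 - p) + E` with `0 ≤ E = p a ^ k (m / n) ≤ 2 p / n`.
Strict convexity of `t ^ k` forces `a ≤ b`, and the second-order bound
`t ^ k ≥ b ^ k + k b ^ (k - 1) (t - b) + b ^ (k - 2) (t - b) ^ 2` gives
`p b ^ (k - 2) (b - a) ^ 2 + (b - a) (1 - k p b ^ (k - 1)) ≤ E`, where the slope gap
`1 - k p b ^ (k - 1)` is nonnegative. If the gap is at least `1 / 2` then `b - a = O(E)`; otherwise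
`p b ^ (k - 2) > 1 / (2 k)`, and then `(b - a) ^ 2 = O(E)`. As `b - a = p (π - ŷ)` and `1 / p < k`,
either way `|ŷ - π| = O(√(m / n))` with a constant depending only on `d`.
-/

open Real Set

theorem tangent_add_sq_le_pow_add_two (j : ℕ) {a b : ℝ} (ha : 0 ≤ a) (hb : 0 ≤ b) :
    b ^ (j + 2) + ((j : ℝ) + 2) * b ^ (j + 1) * (a - b) + b ^ j * (a - b) ^ 2 ≤ a ^ (j + 2) := by
  induction j with
  | zero => norm_num; nlinarith [sq_nonneg (a - b)]
  | succ i ih =>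
    have h := mul_le_mul_of_nonneg_left ih ha
    have hrem : 0 ≤ b ^ i * (a - b) ^ 2 * (((i : ℝ) + 1) * b + a) := by positivity
    push_cast
    simp only [pow_add, pow_one] at *
    nlinarith

section FixedPoint

variable {j : ℕ} {p a b E : ℝ}

-- The convex map `t ↦ p t ^ (j + 2) + (1 - p)` also fixes `1`, so its slope at `b` is at most `1`.
theorem mul_pow_le_one_of_fixed (hp : 0 ≤ p) (hb0 : 0 ≤ b) (hb1 : b < 1)
    (hb : p * b ^ (j + 2) = b - (1 - p)) : ((j : ℝ) + 2) * p * b ^ (j + 1) ≤ 1 := by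
  have h := mul_le_mul_of_nonneg_left (tangent_add_sq_le_pow_add_two j zero_le_one hb0) hp
  have hrem : 0 ≤ p * b ^ j * (1 - b) ^ 2 := by positivity
  have hgap : 0 ≤ (1 - ((j : ℝ) + 2) * p * b ^ (j + 1)) * (1 - b) := by
    linear_combination h + hrem - hb
  nlinarith

-- `t ↦ t - (1 - p) - p t ^ (j + 2)` is strictly concave and vanishes at `b` and at `1`.
theorem le_of_fixed_of_sub_le (hp : 0 < p) (hb0 : 0 ≤ b) (ha1 : a < 1)
    (hb : p * b ^ (j + 2) = b - (1 - p)) (ha : a - (1 - p) ≤ p * a ^ (j + 2)) : a ≤ b := by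
  by_contra! hba
  have h1b : 0 < 1 - b := by linarith
  have hconv := (strictConvexOn_pow (n := j + 2) (by omega)).2 (mem_Ici.2 hb0)
    (mem_Ici.2 zero_le_one) (by linarith) (div_pos (by linarith : 0 < 1 - a) h1b)
    (div_pos (by linarith : 0 < a - b) h1b) (by field_simp; ring)
  have hcomb : (1 - a) / (1 - b) * b + (a - b) / (1 - b) * 1 = a := by field_simp; ring
  simp only [smul_eq_mul, one_pow, hcomb] at hconv
  have := mul_lt_mul_of_pos_left hconv hp
  have hrhs : p * ((1 - a) / (1 - b) * b ^ (j + 2) + (a - b) / (1 - b) * 1) = a - (1 - p) := by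
    field_simp
    linear_combination (1 - a) * hb
  linarith

theorem sub_le_or_sq_sub_le_of_perturbed (hp : 0 < p) (ha0 : 0 ≤ a) (hab : a ≤ b) (hb1 : b < 1)
    (hb : p * b ^ (j + 2) = b - (1 - p)) (ha : p * a ^ (j + 2) = a - (1 - p) + E) :
    b - a ≤ 2 * E ∨ (b - a) ^ 2 ≤ 2 * ((j : ℝ) + 2) * E := by
  have hb0 : 0 ≤ b := ha0.trans hab
  have hslope := mul_pow_le_one_of_fixed hp.le hb0 hb1 hb
  have htangent := mul_le_mul_of_nonneg_left (tangent_add_sq_le_pow_add_two j ha0 hb0) hp.le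
  have hmain : p * b ^ j * (b - a) ^ 2 + (b - a) * (1 - ((j : ℝ) + 2) * p * b ^ (j + 1)) ≤ E := by
    linear_combination htangent + ha - hb
  have hcurv : 0 ≤ p * b ^ j * (b - a) ^ 2 := by positivity
  rcases le_or_gt (1 / 2) (1 - ((j : ℝ) + 2) * p * b ^ (j + 1)) with hD | hD
  · left
    nlinarith
  · right
    have hpow : b ^ (j + 1) ≤ b ^ j := pow_le_pow_of_le_one hb0 hb1.le (by omega)
    have hcurv_ge : 1 ≤ 2 * ((j : ℝ) + 2) * (p * b ^ j) := by
      nlinarith [mul_le_mul_of_nonneg_left hpow (by positivity : (0 : ℝ) ≤ ((j : ℝ) + 2) * p)]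
    have hE : p * b ^ j * (b - a) ^ 2 ≤ E := by
      nlinarith [mul_nonneg (sub_nonneg.2 hab) (sub_nonneg.2 hslope)]
    nlinarith [mul_le_mul_of_nonneg_right hcurv_ge (sq_nonneg (b - a))]

end FixedPoint

theorem abs_sub_le_of_perturbed_fixed {j : ℕ} {p ε x y : ℝ} (hp : 0 < p) (hp1 : p ≤ 1)
    (hpk : 1 < ((j : ℝ) + 2) * p) (hx : x ∈ Ioo (0 : ℝ) 1) (hy : y ∈ Ioo (0 : ℝ) 1)
    (hxeq : x = (p * x + (1 - p)) ^ (j + 2)) (hyeq : y = (p * y + (1 - p)) ^ (j + 2) * (1 - ε))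
    (hε : 0 ≤ ε) : |y - x| ≤ 2 * ((j : ℝ) + 2) * √ε := by
  obtain ⟨hx0, hx1⟩ := hx
  obtain ⟨hy0, hy1⟩ := hy
  set a := p * y + (1 - p) with ha_def
  set b := p * x + (1 - p) with hb_def
  have ha0 : 0 ≤ a := add_nonneg (mul_nonneg hp.le hy0.le) (sub_nonneg.2 hp1)
  have hb0 : 0 ≤ b := add_nonneg (mul_nonneg hp.le hx0.le) (sub_nonneg.2 hp1)
  have ha1 : a < 1 := by nlinarith
  have hb1 : b < 1 := by nlinarith
  have hb : p * b ^ (j + 2) = b - (1 - p) := by linear_combination -p * hxeq - hb_def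
  have ha : p * a ^ (j + 2) = a - (1 - p) + p * a ^ (j + 2) * ε := by
    linear_combination -p * hyeq - ha_def
  have hE0 : 0 ≤ p * a ^ (j + 2) * ε := by positivity
  have hE1 : p * a ^ (j + 2) * ε ≤ p * ε :=
    mul_le_mul_of_nonneg_right (mul_le_of_le_one_right hp.le (pow_le_one₀ ha0 ha1.le)) hε
  have hab : a ≤ b := le_of_fixed_of_sub_le hp hb0 ha1 hb (by linarith)
  have hxy : b - a = p * (x - y) := by ring
  have hxy0 : 0 ≤ x - y := by nlinarith
  have hsq : (y - x) ^ 2 ≤ 4 * ((j : ℝ) + 2) ^ 2 * ε := by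
    rcases sub_le_or_sq_sub_le_of_perturbed hp ha0 hab hb1 hb ha with h | h
    · rw [hxy] at h
      have hle : x - y ≤ 2 * ε := by nlinarith
      have : (x - y) * (x - y) ≤ 1 * (2 * ε) := mul_le_mul (by linarith) hle hxy0 zero_le_one
      nlinarith [mul_nonneg (by positivity : (0 : ℝ) ≤ (j : ℝ) ^ 2 + 4 * j) hε]
    · rw [hxy] at h
      have : p * (x - y) ^ 2 ≤ 2 * ((j : ℝ) + 2) * ε := by nlinarith
      nlinarith [sq_nonneg (x - y)]
  refine abs_le_of_sq_le_sq ?_ (by positivity)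
  rw [mul_pow, sq_sqrt hε]
  linarith

theorem stmt_14_general (d : ℕ) (hd : 3 ≤ d) (B : ℝ) :
    ∃ C : ℝ, 0 < C ∧
      ∀ n : ℕ, 1 ≤ n → ∀ m : ℕ, m ≤ 2 →
        ∀ p : ℝ, 1 / ((d : ℝ) - 1) < p → p - 1 / ((d : ℝ) - 1) ≤ B → p < 1 →
          ∀ yhat ∈ Set.Ioo (0 : ℝ) 1,
            yhat = (p * yhat + (1 - p)) ^ (d - 1) * (1 - (m : ℝ) / n) →
            ∀ x ∈ Set.Ioo (0 : ℝ) 1,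
              x = (p * x + (1 - p)) ^ (d - 1) →
              |yhat - x| ≤ C / Real.sqrt n := by
  obtain ⟨j, rfl⟩ : ∃ j, d = j + 3 := ⟨d - 3, by omega⟩
  refine ⟨4 * ((j : ℝ) + 2), by positivity, ?_⟩
  intro n hn m hm p hp _ hp1 yhat hy hyeq x hx hxeq
  have hpk : 1 < ((j : ℝ) + 2) * p := by
    rw [show ((j + 3 : ℕ) : ℝ) - 1 = (j : ℝ) + 2 by push_cast; ring,
      div_lt_iff₀ (by positivity)] at hp
    linarith
  have hp0 : 0 < p := pos_of_mul_pos_right (one_pos.trans hpk) (by positivity)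
  have hn0 : (0 : ℝ) < n := by exact_mod_cast hn
  have hsqrt_m : √(m : ℝ) ≤ 2 := (sqrt_le_left zero_le_two).2 (by norm_cast; omega)
  calc |yhat - x| ≤ 2 * ((j : ℝ) + 2) * √((m : ℝ) / n) :=
        abs_sub_le_of_perturbed_fixed hp0 hp1.le hpk hx hy hxeq hyeq (by positivity)
    _ ≤ 2 * ((j : ℝ) + 2) * (2 / √n) := by
        rw [sqrt_div' _ hn0.le]
        gcongr
    _ = 4 * ((j : ℝ) + 2) / √n := by ring

theorem stmt_14 (d : ℕ) (hd : 3 ≤ d) (B : ℝ) (hB : 0 < B) :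
    ∃ C : ℝ, 0 < C ∧
      ∀ n : ℕ, 1 ≤ n → ∀ m : ℕ, m ≤ 2 →
        ∀ p : ℝ, 1 / ((d : ℝ) - 1) < p → p - 1 / ((d : ℝ) - 1) ≤ B → p < 1 →
          ∀ yhat ∈ Set.Ioo (0 : ℝ) 1,
            yhat = (p * yhat + (1 - p)) ^ (d - 1) * (1 - (m : ℝ) / n) →
            ∀ x ∈ Set.Ioo (0 : ℝ) 1,
              x = (p * x + (1 - p)) ^ (d - 1) →
              |yhat - x| ≤ C / Real.sqrt n :=
  stmt_14_general d hd B
end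

section
/- For each j with 0 ≤ j ≤ d, the function F_j(x) = y^{-j} ∑_{r=j}^{d} q^{r-j} C(r,j) (1 - y^{-1})^{r-j} i_r, where x = (a, i_0, ..., i_d), y = (a + ∑_{r=0}^d r i_r)^{1/2} (assuming this is positive), is a first integral of the ODE system a' = -2a/(a+i) + p∑_r (r i_r/(a+i))(r-2) - q∑_r r i_r/(a+i), i_j' = (q(j+1)i_{j+1} - j i_j)/(a+i): along any solution x(τ) with a(τ)+i(τ) > 0, F_j(x(τ)) is constant. -/
/-!
Write `u = (a + i)^{-1/2}`. Then `∑_j F_j s^j = ∑_r i_r (q (1 - u) + u s)^r`, so it suffices that this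
generating function is constant in time for every `s`. Along solutions `a + i` has derivative `-2`,
hence `u' = u³`, and with these the time derivative of the generating function telescopes to `0`
because `i_{d+1} = 0`.
-/

open Finset Polynomial

theorem HasDerivAt.inv_sqrt {f : ℝ → ℝ} {f' τ : ℝ} (hf : HasDerivAt f f' τ) (hpos : 0 < f τ) :
    HasDerivAt (fun t => (√(f t))⁻¹) (-(f' / 2) * (√(f τ))⁻¹ ^ 3) τ := by
  have hsqrt : √(f τ) ≠ 0 := (Real.sqrt_pos.2 hpos).ne'
  refine ((hf.sqrt hpos.ne').inv hsqrt).congr_deriv ?_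
  field_simp

theorem eq_of_hasDerivAt_zero_on_Icc {E : Type*} [NormedAddCommGroup E] [NormedSpace ℝ E]
    {f : ℝ → E} {a b : ℝ} (hf : ∀ x ∈ Set.Icc a b, HasDerivAt f 0 x) :
    ∀ x ∈ Set.Icc a b, ∀ y ∈ Set.Icc a b, f x = f y := by
  have hconst := constant_of_has_deriv_right_zero
    (fun x hx => (hf x hx).continuousAt.continuousWithinAt)
    fun x hx => (hf x (Set.Ico_subset_Icc_self hx)).hasDerivWithinAt
  intro x hx y hy
  rw [hconst x hx, hconst y hy]

theorem Polynomial.coeff_sum_C_mul_X_add_C_pow {R : Type*} [CommSemiring R] (x : ℕ → R)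
    (α : R) (n j : ℕ) :
    (∑ r ∈ range (n + 1), C (x r) * (X + C α) ^ r).coeff j
      = ∑ r ∈ Icc j n, x r * α ^ (r - j) * r.choose j := by
  simp only [finsetSum_coeff, coeff_C_mul, coeff_X_add_C_pow, ← mul_assoc]
  refine (sum_subset (fun r hr => ?_) fun r hr hrj => ?_).symm
  · rw [mem_range]; rw [mem_Icc] at hr; omega
  · rw [mem_range] at hr; rw [mem_Icc] at hrj
    rw [Nat.choose_eq_zero_of_lt (by omega), Nat.cast_zero, mul_zero]

-- The quantity `a + i`, with `i = ∑ r i_r`; the paper's `y` is its square root.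
def mass (d : ℕ) (a : ℝ → ℝ) (ii : ℕ → ℝ → ℝ) (t : ℝ) : ℝ :=
  a t + ∑ r ∈ range (d + 1), (r : ℝ) * ii r t

theorem hasDerivAt_mass {p q τ : ℝ} {d : ℕ} {a : ℝ → ℝ} {ii : ℕ → ℝ → ℝ} (hpq : p + q = 1)
    (hend : ii (d + 1) τ = 0) (hmass : mass d a ii τ ≠ 0)
    (ha : HasDerivAt a
      (a τ / mass d a ii τ * (-2)
        + p * ∑ r ∈ range (d + 1), (r * ii r τ / mass d a ii τ) * ((r : ℝ) - 2)
        + q * ∑ r ∈ range (d + 1), (r * ii r τ / mass d a ii τ) * (-1)) τ)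
    (hi : ∀ j ≤ d, HasDerivAt (ii j) ((q * (j + 1) * ii (j + 1) τ - j * ii j τ) / mass d a ii τ) τ) :
    HasDerivAt (mass d a ii) (-2) τ := by
  set S := mass d a ii τ with hS
  have hsum : HasDerivAt (fun t => ∑ r ∈ range (d + 1), (r : ℝ) * ii r t)
      (∑ r ∈ range (d + 1), r * ((q * (r + 1) * ii (r + 1) τ - r * ii r τ) / S)) τ :=
    HasDerivAt.fun_sum fun r hr => (hi r (Nat.lt_succ_iff.1 (mem_range.1 hr))).const_mul _
  let g (r : ℕ) : ℝ := q * ((r : ℝ) - 1) * r * ii r τ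
  have hterm : ∀ r : ℕ,
      p * (r * ii r τ / S * ((r : ℝ) - 2)) + q * (r * ii r τ / S * (-1))
        + r * ((q * (r + 1) * ii (r + 1) τ - r * ii r τ) / S)
      = (-2 * (r * ii r τ) + (g (r + 1) - g r)) / S := by
    intro r
    simp only [g]
    push_cast
    field_simp
    linear_combination (r * ii r τ * (r - 2)) * hpq
  refine (ha.add hsum).congr_deriv ?_
  calc _ = a τ / S * (-2) + ∑ r ∈ range (d + 1), (-2 * (r * ii r τ) + (g (r + 1) - g r)) / S := by
        simp only [← hterm, mul_sum, sum_add_distrib, add_assoc]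
    _ = (-2) * S / S := by
        rw [← sum_div, sum_add_distrib, sum_range_sub, ← mul_sum, hS, mass]
        simp only [g, hend]
        ring
    _ = -2 := by field_simp

theorem hasDerivAt_sum_mul_pow_eq_zero {q s τ : ℝ} {d : ℕ} {u : ℝ → ℝ} {ii : ℕ → ℝ → ℝ}
    (hu : HasDerivAt u (u τ ^ 3) τ)
    (hi : ∀ r ≤ d, HasDerivAt (ii r) (u τ ^ 2 * (q * (r + 1) * ii (r + 1) τ - r * ii r τ)) τ)
    (hend : ii (d + 1) τ = 0) :
    HasDerivAt (fun t => ∑ r ∈ range (d + 1), ii r t * (u t * s + q * (1 - u t)) ^ r) 0 τ := by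
  have hz : HasDerivAt (fun t => u t * s + q * (1 - u t)) ((s - q) * u τ ^ 3) τ :=
    ((hu.mul_const s).add (((hasDerivAt_const τ 1).sub hu).const_mul q)).congr_deriv (by ring)
  let g (r : ℕ) : ℝ := q * u τ ^ 2 * r * ii r τ * (u τ * s + q * (1 - u τ)) ^ (r - 1)
  have hterm : ∀ r ∈ range (d + 1),
      HasDerivAt (fun t => ii r t * (u t * s + q * (1 - u t)) ^ r) (g (r + 1) - g r) τ := by
    intro r hr
    refine ((hi r (Nat.lt_succ_iff.1 (mem_range.1 hr))).mul (hz.fun_pow r)).congr_deriv ?_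
    cases r with
    | zero => simp only [g]; push_cast; ring
    | succ k => simp only [g, Nat.add_sub_cancel]; push_cast; ring
  refine (HasDerivAt.fun_sum hterm).congr_deriv ?_
  rw [sum_range_sub]
  simp [g, hend]

theorem stmt_17_general (d : ℕ) (p q : ℝ)
    (hpq : p + q = 1)
    (T : ℝ) (a : ℝ → ℝ) (ii : ℕ → ℝ → ℝ)
    (hiend : ∀ τ, ii (d + 1) τ = 0)
    (hpos : ∀ τ ∈ Set.Icc (0 : ℝ) T,
      0 < a τ + ∑ r ∈ Finset.range (d + 1), (r : ℝ) * ii r τ)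
    (ha : ∀ τ ∈ Set.Icc (0 : ℝ) T,
      HasDerivAt a
        ((a τ / (a τ + ∑ r ∈ Finset.range (d + 1), (r : ℝ) * ii r τ)) * (-2)
          + p * ∑ r ∈ Finset.range (d + 1),
              ((r : ℝ) * ii r τ / (a τ + ∑ s ∈ Finset.range (d + 1), (s : ℝ) * ii s τ))
                * ((r : ℝ) - 2)
          + q * ∑ r ∈ Finset.range (d + 1),
              ((r : ℝ) * ii r τ / (a τ + ∑ s ∈ Finset.range (d + 1), (s : ℝ) * ii s τ))
                * (-1)) τ)
    (hi : ∀ j ≤ d, ∀ τ ∈ Set.Icc (0 : ℝ) T,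
      HasDerivAt (ii j)
        ((q * ((j : ℝ) + 1) * ii (j + 1) τ - (j : ℝ) * ii j τ)
          / (a τ + ∑ r ∈ Finset.range (d + 1), (r : ℝ) * ii r τ)) τ)
    (F : ℕ → ℝ → ℝ)
    (hF : ∀ j τ, F j τ =
      (Real.sqrt (a τ + ∑ r ∈ Finset.range (d + 1), (r : ℝ) * ii r τ))⁻¹ ^ j *
        ∑ r ∈ Finset.Icc j d,
          q ^ (r - j) * (Nat.choose r j) *
            (1 - (Real.sqrt (a τ + ∑ s ∈ Finset.range (d + 1), (s : ℝ) * ii s τ))⁻¹)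
              ^ (r - j) * ii r τ) :
    ∀ j ≤ d, ∀ τ₁ ∈ Set.Icc (0 : ℝ) T, ∀ τ₂ ∈ Set.Icc (0 : ℝ) T,
      F j τ₁ = F j τ₂ := by
  intro j _ τ₁ hτ₁ τ₂ hτ₂
  set u : ℝ → ℝ := fun t => (√(mass d a ii t))⁻¹ with hu_def
  have hu : ∀ τ ∈ Set.Icc 0 T, HasDerivAt u (u τ ^ 3) τ := fun τ hτ =>
    ((hasDerivAt_mass hpq (hiend τ) (hpos τ hτ).ne' (ha τ hτ) fun j hj => hi j hj τ hτ).inv_sqrt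
      (hpos τ hτ)).congr_deriv (by ring)
  have hii : ∀ r ≤ d, ∀ τ ∈ Set.Icc 0 T,
      HasDerivAt (ii r) (u τ ^ 2 * (q * (r + 1) * ii (r + 1) τ - r * ii r τ)) τ := by
    intro r hr τ hτ
    rw [hu_def, inv_pow, Real.sq_sqrt (show 0 ≤ mass d a ii τ from (hpos τ hτ).le),
      ← div_eq_inv_mul]
    exact hi r hr τ hτ
  let P (t : ℝ) : ℝ[X] :=
    (∑ r ∈ range (d + 1), C (ii r t) * (X + C (q * (1 - u t))) ^ r).comp (C (u t) * X)
  have hP : P τ₁ = P τ₂ := Polynomial.funext fun s => by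
    simpa [P, eval_finsetSum] using eq_of_hasDerivAt_zero_on_Icc (fun τ hτ =>
      hasDerivAt_sum_mul_pow_eq_zero (s := s) (hu τ hτ) (fun r hr => hii r hr τ hτ) (hiend τ))
      τ₁ hτ₁ τ₂ hτ₂
  have hF_u : ∀ t, F j t =
      u t ^ j * ∑ r ∈ Icc j d, q ^ (r - j) * r.choose j * (1 - u t) ^ (r - j) * ii r t :=
    hF j
  have hF_coeff : ∀ t, F j t = (P t).coeff j := by
    intro t
    rw [hF_u, comp_C_mul_X_coeff, coeff_sum_C_mul_X_add_C_pow, mul_comm]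
    congr 1
    exact sum_congr rfl fun r _ => by rw [mul_pow]; ring
  rw [hF_coeff, hF_coeff, hP]

theorem stmt_17 (d : ℕ) (hd : 3 ≤ d) (p q : ℝ) (hp : 0 < p) (hp1 : p < 1)
    (hpq : p + q = 1)
    (T : ℝ) (hT : 0 < T) (a : ℝ → ℝ) (ii : ℕ → ℝ → ℝ)
    (hiend : ∀ τ, ii (d + 1) τ = 0)
    (hpos : ∀ τ ∈ Set.Icc (0 : ℝ) T,
      0 < a τ + ∑ r ∈ Finset.range (d + 1), (r : ℝ) * ii r τ)
    (ha : ∀ τ ∈ Set.Icc (0 : ℝ) T,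
      HasDerivAt a
        ((a τ / (a τ + ∑ r ∈ Finset.range (d + 1), (r : ℝ) * ii r τ)) * (-2)
          + p * ∑ r ∈ Finset.range (d + 1),
              ((r : ℝ) * ii r τ / (a τ + ∑ s ∈ Finset.range (d + 1), (s : ℝ) * ii s τ))
                * ((r : ℝ) - 2)
          + q * ∑ r ∈ Finset.range (d + 1),
              ((r : ℝ) * ii r τ / (a τ + ∑ s ∈ Finset.range (d + 1), (s : ℝ) * ii s τ))
                * (-1)) τ)
    (hi : ∀ j ≤ d, ∀ τ ∈ Set.Icc (0 : ℝ) T,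
      HasDerivAt (ii j)
        ((q * ((j : ℝ) + 1) * ii (j + 1) τ - (j : ℝ) * ii j τ)
          / (a τ + ∑ r ∈ Finset.range (d + 1), (r : ℝ) * ii r τ)) τ)
    (F : ℕ → ℝ → ℝ)
    (hF : ∀ j τ, F j τ =
      (Real.sqrt (a τ + ∑ r ∈ Finset.range (d + 1), (r : ℝ) * ii r τ))⁻¹ ^ j *
        ∑ r ∈ Finset.Icc j d,
          q ^ (r - j) * (Nat.choose r j) *
            (1 - (Real.sqrt (a τ + ∑ s ∈ Finset.range (d + 1), (s : ℝ) * ii s τ))⁻¹)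
              ^ (r - j) * ii r τ) :
    ∀ j ≤ d, ∀ τ₁ ∈ Set.Icc (0 : ℝ) T, ∀ τ₂ ∈ Set.Icc (0 : ℝ) T,
      F j τ₁ = F j τ₂ :=
  stmt_17_general d p q hpq T a ii hiend hpos ha hi F hF
end

section
/- Let d ≥ 3, p ∈ (0,1), q = 1-p, π ∈ (0,1) the root of π = (pπ+q)^{d-1} when p > 1/(d-1). Then as p ↓ p* = 1/(d-1), the quantity α(p) = 1 - (pπ + q)^d satisfies α(p) ≍ p - p*: there exist constants c_1, c_2 > 0 depending only on d and ε > 0 such that c_1 (p-p*) ≤ α(p) ≤ c_2 (p-p*) for all 0 < p - p* < ε. -/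
/-!
Put `n = d - 1` and `y = pπ + q`, so that `π = yⁿ` and `α = 1 - yⁿ⁺¹ ≍ 1 - y`. Dividing
`1 - y = p (1 - yⁿ)` by `1 - y` gives `p · ∑_{k<n} yᵏ = 1`, hence
`(p - 1/n) · n ∑_{k<n} yᵏ = n - ∑_{k<n} yᵏ = ∑_{k<n} (1 - yᵏ)`. The right-hand side lies between
`1 - y` and `n² (1 - y)`, and `n ∑_{k<n} yᵏ` between `n` and `n²`.
-/

open Finset

lemma one_sub_pow_le_mul_one_sub {y : ℝ} (hy : -1 ≤ y) (k : ℕ) : 1 - y ^ k ≤ k * (1 - y) := by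
  have bernoulli := one_add_mul_le_pow (show -2 ≤ y - 1 by linarith) k
  rw [add_sub_cancel] at bernoulli
  linarith

lemma one_sub_le_one_sub_pow {y : ℝ} (hy₀ : 0 ≤ y) (hy₁ : y ≤ 1) {k : ℕ} (hk : k ≠ 0) :
    1 - y ≤ 1 - y ^ k :=
  sub_le_sub_left (pow_le_of_le_one hy₀ hy₁ hk) 1

lemma one_le_geom_sum {y : ℝ} (hy : 0 ≤ y) {n : ℕ} (hn : n ≠ 0) :
    1 ≤ ∑ k ∈ range n, y ^ k := by
  simpa using single_le_sum (fun k _ ↦ pow_nonneg hy k) (mem_range.2 (Nat.pos_of_ne_zero hn))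

lemma sub_geom_sum_eq (y : ℝ) (n : ℕ) :
    n - ∑ k ∈ range n, y ^ k = ∑ k ∈ range n, (1 - y ^ k) := by
  simp [sum_sub_distrib]

lemma geom_sum_le_of_le_one {y : ℝ} (hy₀ : 0 ≤ y) (hy₁ : y ≤ 1) (n : ℕ) :
    ∑ k ∈ range n, y ^ k ≤ n := by
  simpa using sum_le_card_nsmul (range n) (fun k ↦ y ^ k) 1 fun k _ ↦ pow_le_one₀ hy₀ hy₁

lemma one_sub_le_sub_geom_sum {y : ℝ} (hy₀ : 0 ≤ y) (hy₁ : y ≤ 1) {n : ℕ} (hn : 2 ≤ n) :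
    1 - y ≤ n - ∑ k ∈ range n, y ^ k := by
  rw [sub_geom_sum_eq]
  simpa using single_le_sum (fun k _ ↦ sub_nonneg.2 (pow_le_one₀ hy₀ hy₁ (n := k)))
    (mem_range.2 (show 1 < n by omega))

lemma sub_geom_sum_le {y : ℝ} (hy₀ : -1 ≤ y) (hy₁ : y ≤ 1) (n : ℕ) :
    n - ∑ k ∈ range n, y ^ k ≤ n ^ 2 * (1 - y) := by
  have term_le : ∀ k ∈ range n, 1 - y ^ k ≤ n * (1 - y) := fun k hk ↦
    (one_sub_pow_le_mul_one_sub hy₀ k).trans <| mul_le_mul_of_nonneg_right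
      (by exact_mod_cast (mem_range.1 hk).le) (sub_nonneg.2 hy₁)
  calc n - ∑ k ∈ range n, y ^ k = ∑ k ∈ range n, (1 - y ^ k) := sub_geom_sum_eq y n
    _ ≤ #(range n) • (n * (1 - y)) := sum_le_card_nsmul _ _ _ term_le
    _ = n ^ 2 * (1 - y) := by rw [card_range, nsmul_eq_mul]; ring

section

variable {n : ℕ} {p y : ℝ}

lemma mul_geom_sum_eq_one_of_eq {x : ℝ} (hy : y ≠ 1) (hx : x = y ^ n)
    (hy_def : y = p * x + (1 - p)) : p * ∑ k ∈ range n, y ^ k = 1 := by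
  have h : (1 - y) * (p * ∑ k ∈ range n, y ^ k) = (1 - y) * 1 := by
    rw [mul_left_comm, mul_neg_geom_sum, ← hx]
    linarith
  exact mul_left_cancel₀ (sub_ne_zero.2 hy.symm) h

lemma sub_inv_mul_eq_of_mul_geom_sum_eq_one (hn : n ≠ 0)
    (hpS : p * ∑ k ∈ range n, y ^ k = 1) :
    (p - 1 / n) * (n * ∑ k ∈ range n, y ^ k) = n - ∑ k ∈ range n, y ^ k := by
  have hn' : (n : ℝ) ≠ 0 := by exact_mod_cast hn
  field_simp
  linear_combination (n : ℝ) * hpS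

lemma sub_inv_le_of_mul_geom_sum_eq_one (hn : n ≠ 0) (hp : 1 / n ≤ p) (hy₀ : 0 ≤ y)
    (hy₁ : y ≤ 1) (hpS : p * ∑ k ∈ range n, y ^ k = 1) : p - 1 / n ≤ n * (1 - y) := by
  have hn₀ : (0 : ℝ) < n := by exact_mod_cast Nat.pos_of_ne_zero hn
  have key : (p - 1 / n) * n ≤ n ^ 2 * (1 - y) :=
    calc (p - 1 / n) * n
        ≤ (p - 1 / n) * (n * ∑ k ∈ range n, y ^ k) := mul_le_mul_of_nonneg_left
          (le_mul_of_one_le_right hn₀.le (one_le_geom_sum hy₀ hn)) (sub_nonneg.2 hp)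
      _ = n - ∑ k ∈ range n, y ^ k := sub_inv_mul_eq_of_mul_geom_sum_eq_one hn hpS
      _ ≤ n ^ 2 * (1 - y) := sub_geom_sum_le (by linarith) hy₁ n
  rw [← mul_le_mul_iff_of_pos_right hn₀]
  linarith

lemma one_sub_le_of_mul_geom_sum_eq_one (hn : 2 ≤ n) (hp : 1 / n ≤ p) (hy₀ : 0 ≤ y)
    (hy₁ : y ≤ 1) (hpS : p * ∑ k ∈ range n, y ^ k = 1) : 1 - y ≤ n ^ 2 * (p - 1 / n) :=
  calc 1 - y ≤ n - ∑ k ∈ range n, y ^ k := one_sub_le_sub_geom_sum hy₀ hy₁ hn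
    _ = (p - 1 / n) * (n * ∑ k ∈ range n, y ^ k) :=
      (sub_inv_mul_eq_of_mul_geom_sum_eq_one (by omega) hpS).symm
    _ ≤ (p - 1 / n) * (n * n) := mul_le_mul_of_nonneg_left
      (mul_le_mul_of_nonneg_left (geom_sum_le_of_le_one hy₀ hy₁ n) (Nat.cast_nonneg n))
      (sub_nonneg.2 hp)
    _ = n ^ 2 * (p - 1 / n) := by ring

lemma one_sub_pow_succ_mem_Icc (hn : 2 ≤ n) (hp : 1 / n ≤ p) (hy₀ : 0 ≤ y) (hy₁ : y ≤ 1)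
    (hpS : p * ∑ k ∈ range n, y ^ k = 1) :
    1 - y ^ (n + 1) ∈ Set.Icc (1 / n * (p - 1 / n)) ((n + 1) * n ^ 2 * (p - 1 / n)) := by
  have hn₀ : (0 : ℝ) < n := by exact_mod_cast (show 0 < n by omega)
  constructor
  · calc 1 / n * (p - 1 / n)
        ≤ 1 / n * (n * (1 - y)) := mul_le_mul_of_nonneg_left
          (sub_inv_le_of_mul_geom_sum_eq_one (by omega) hp hy₀ hy₁ hpS) (by positivity)
      _ = 1 - y := by field_simp
      _ ≤ 1 - y ^ (n + 1) := one_sub_le_one_sub_pow hy₀ hy₁ n.succ_ne_zero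
  · calc 1 - y ^ (n + 1)
        ≤ (n + 1 : ℕ) * (1 - y) := one_sub_pow_le_mul_one_sub (by linarith) (n + 1)
      _ ≤ (n + 1) * (n ^ 2 * (p - 1 / n)) := by
        push_cast
        exact mul_le_mul_of_nonneg_left
          (one_sub_le_of_mul_geom_sum_eq_one hn hp hy₀ hy₁ hpS) (by positivity)
      _ = (n + 1) * n ^ 2 * (p - 1 / n) := by ring

end

theorem stmt_19 (d : ℕ) (hd : 3 ≤ d) :
    ∃ c₁ c₂ ε : ℝ, 0 < c₁ ∧ 0 < c₂ ∧ 0 < ε ∧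
      ∀ p : ℝ, 1 / ((d : ℝ) - 1) < p → p - 1 / ((d : ℝ) - 1) < ε → p < 1 →
        ∀ x : ℝ, x ∈ Set.Ioo (0 : ℝ) 1 → x = (p * x + (1 - p)) ^ (d - 1) →
          c₁ * (p - 1 / ((d : ℝ) - 1)) ≤ 1 - (p * x + (1 - p)) ^ d ∧
          1 - (p * x + (1 - p)) ^ d ≤ c₂ * (p - 1 / ((d : ℝ) - 1)) := by
  obtain ⟨n, rfl⟩ : ∃ n, d = n + 1 := ⟨d - 1, by omega⟩
  have hn : 2 ≤ n := by omega
  have hn₀ : (0 : ℝ) < n := by exact_mod_cast (show 0 < n by omega)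
  have hD : ((n + 1 : ℕ) : ℝ) - 1 = n := by push_cast; ring
  simp only [hD, Nat.add_sub_cancel]
  refine ⟨1 / n, (n + 1) * n ^ 2, 1, by positivity, by positivity, one_pos, ?_⟩
  intro p hp _ hp₁ x ⟨hx₀, hx₁⟩ hx
  set y := p * x + (1 - p) with hy
  have hp₀ : 0 < p := (show (0 : ℝ) < 1 / n by positivity).trans hp
  have hy₀ : 0 ≤ y := by nlinarith
  have hy₁ : y < 1 := by nlinarith
  exact one_sub_pow_succ_mem_Icc hn hp.le hy₀ hy₁.le (mul_geom_sum_eq_one_of_eq hy₁.ne hx hy)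
end
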